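/- For all positive constants α₁, α₂ there is a positive constant C such that for every η > 0 there is n₀ with the following property for all n ≥ n₀. Let A be an n × n real matrix of rank r ≤ n^{1−α₁} whose largest singular value satisfies σ₁ ≤ n^{α₂} and whose gap δ := σ₁ − σ₂ is positive, and let E be an n × n random matrix with independent entries each equal to +1 or −1 with probability 1/2. Write a unit singular vector v₁′ of A + E corresponding to its largest singular value as v₁′ = w + c₀u, where w is the orthogonal projection of v₁′ onto the span of the right singular vectors v₁, …, v_r of A (equivalently, onto the row space of A), u is a unit vector orthogonal to that span, and c₀ ≥ 0. Then with probability at least 1 − η, c₀² ≤ C √n / σ₁. -/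

import Mathlib

open MeasureTheory ProbabilityTheory Matrix

noncomputable def eucNorm {n : ℕ} (v : Fin n → ℝ) : ℝ := Real.sqrt (∑ i, v i ^ 2)

/-- The `k`-th largest singular value (k ≥ 1) of a square real matrix, via the
Courant–Fischer minimax characterization. -/
noncomputable def singVal {n : ℕ} (M : Matrix (Fin n) (Fin n) ℝ) (k : ℕ) : ℝ :=
  sSup {x : ℝ | ∃ H : Submodule ℝ (Fin n → ℝ), Module.finrank ℝ H = k ∧
    x = sInf {y : ℝ | ∃ v ∈ H, eucNorm v = 1 ∧ y = eucNorm (M.mulVec v)}}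

/-- The spectral norm of a square real matrix. -/
noncomputable def specNorm {n : ℕ} (M : Matrix (Fin n) (Fin n) ℝ) : ℝ :=
  sSup {x : ℝ | ∃ v : Fin n → ℝ, eucNorm v = 1 ∧ x = eucNorm (M.mulVec v)}

/-- `v` is a unit singular vector of `M` corresponding to the singular value `σ`. -/
def IsUnitSingVec {n : ℕ} (M : Matrix (Fin n) (Fin n) ℝ) (σ : ℝ) (v : Fin n → ℝ) : Prop :=
  eucNorm v = 1 ∧ (Mᵀ * M).mulVec v = σ ^ 2 • v

/-- `sin ∠(u,v) = √(1 - (u·v)²)` for unit vectors `u, v`. -/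
noncomputable def sinAngle {n : ℕ} (u v : Fin n → ℝ) : ℝ :=
  Real.sqrt (1 - (∑ i, u i * v i) ^ 2)

/-- `E` is a random Bernoulli matrix: independent entries, each `±1` with probability `1/2`. -/
def IsBernoulliMatrix {Ω : Type} [MeasurableSpace Ω] (μ : Measure Ω) {n : ℕ}
    (E : Ω → Matrix (Fin n) (Fin n) ℝ) : Prop :=
  (∀ i j, Measurable fun ω => E ω i j) ∧
  iIndepFun (fun (p : Fin n × Fin n) (ω : Ω) => E ω p.1 p.2) μ ∧
  ∀ i j, μ {ω | E ω i j = 1} = 1/2 ∧ μ {ω | E ω i j = -1} = 1/2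

/-!
On the event `‖E‖ ≤ 8√n` the bound is deterministic. Let `T` and `S` be the operators of `A` and
`E`; then `σ₁(A) = ‖T‖`, and `T` kills the component `c₀ u` of `v₁'` orthogonal to the row space, so
`‖T‖ - ‖S‖ ≤ ‖T + S‖ = ‖(T + S) v₁'‖ ≤ ‖T‖ ‖w‖ + ‖S‖`. Hence `‖T‖ (1 - ‖w‖) ≤ 2 ‖S‖`, and
`c₀² = 1 - ‖w‖² ≤ 2 (1 - ‖w‖)` gives `c₀² σ₁ ≤ 4 ‖E‖ ≤ 32 √n`.

That event has probability at least `1 - (81 e⁻⁸)ⁿ`. A volume argument gives a `1/4`-net `N` of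
the unit ball with at most `9ⁿ` points, and `‖E‖ ≤ 2 max_{x, y ∈ N} ⟪x, E y⟫`. Each `⟪x, E y⟫` is a
Rademacher sum whose squared coefficients sum to at most `1`, so by Hoeffding's inequality it
exceeds `4 √n` with probability at most `e^{-8n}`; a union bound over the `81ⁿ` pairs concludes.
-/

open scoped RealInnerProductSpace NNReal ENNReal
open Metric

section SingularValues

variable {n : ℕ}

lemma eucNorm_eq_norm_toLp (v : Fin n → ℝ) : eucNorm v = ‖WithLp.toLp 2 v‖ := by
  simp [eucNorm, EuclideanSpace.norm_eq]

lemma eucNorm_smul (a : ℝ) (v : Fin n → ℝ) : eucNorm (a • v) = |a| * eucNorm v := by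
  simp only [eucNorm_eq_norm_toLp, WithLp.toLp_smul, norm_smul, Real.norm_eq_abs]

lemma eucNorm_sq (v : Fin n → ℝ) : eucNorm v ^ 2 = v ⬝ᵥ v := by
  rw [eucNorm, Real.sq_sqrt (Finset.sum_nonneg fun i _ => sq_nonneg _)]
  simp [dotProduct, sq]

lemma singVal_nonneg (M : Matrix (Fin n) (Fin n) ℝ) (k : ℕ) : 0 ≤ singVal M k :=
  Real.sSup_nonneg fun _ ⟨_, _, hx⟩ =>
    hx ▸ Real.sInf_nonneg fun _ ⟨_, _, _, hy⟩ => hy ▸ Real.sqrt_nonneg _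

lemma setOf_eucNorm_mulVec_unit_mem_span_singleton (M : Matrix (Fin n) (Fin n) ℝ) {v : Fin n → ℝ}
    (hv : eucNorm v = 1) :
    {y | ∃ w ∈ Submodule.span ℝ {v}, eucNorm w = 1 ∧ y = eucNorm (M *ᵥ w)} =
      {eucNorm (M *ᵥ v)} := by
  ext y
  constructor
  · rintro ⟨w, hw, hw1, rfl⟩
    obtain ⟨a, rfl⟩ := Submodule.mem_span_singleton.1 hw
    rw [eucNorm_smul, hv, mul_one] at hw1
    rw [mulVec_smul, eucNorm_smul, hw1, one_mul]
    rfl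
  · rintro rfl
    exact ⟨v, Submodule.mem_span_singleton_self v, hv, rfl⟩

lemma exists_eq_span_singleton_of_finrank_eq_one {H : Submodule ℝ (Fin n → ℝ)}
    (hH : Module.finrank ℝ H = 1) : ∃ v, eucNorm v = 1 ∧ H = Submodule.span ℝ {v} := by
  obtain ⟨x, hxH, hx0⟩ := Submodule.exists_mem_ne_zero_of_ne_bot
    (Submodule.one_le_finrank_iff.1 hH.ge)
  have hx : 0 < eucNorm x := by
    rw [eucNorm_eq_norm_toLp]; exact norm_pos_iff.2 (by simpa using hx0)
  refine ⟨(eucNorm x)⁻¹ • x, by rw [eucNorm_smul, abs_inv, abs_of_pos hx, inv_mul_cancel₀ hx.ne'],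
    (Submodule.eq_of_le_of_finrank_eq ?_ ?_).symm⟩
  · exact (Submodule.span_singleton_le_iff_mem _ _).2 (H.smul_mem _ hxH)
  · rw [hH, finrank_span_singleton (smul_ne_zero (inv_ne_zero hx.ne') hx0)]

lemma singVal_one_eq_specNorm (M : Matrix (Fin n) (Fin n) ℝ) : singVal M 1 = specNorm M := by
  unfold singVal specNorm
  congr 1
  ext x
  constructor
  · rintro ⟨H, hH, rfl⟩
    obtain ⟨v, hv, rfl⟩ := exists_eq_span_singleton_of_finrank_eq_one hH
    rw [setOf_eucNorm_mulVec_unit_mem_span_singleton M hv, csInf_singleton]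
    exact ⟨v, hv, rfl⟩
  · rintro ⟨v, hv, rfl⟩
    have hv0 : v ≠ 0 := by rintro rfl; simp [eucNorm] at hv
    refine ⟨_, finrank_span_singleton hv0, ?_⟩
    rw [setOf_eucNorm_mulVec_unit_mem_span_singleton M hv, csInf_singleton]

lemma specNorm_eq_norm_toEuclideanCLM (M : Matrix (Fin n) (Fin n) ℝ) :
    specNorm M = ‖toEuclideanCLM (𝕜 := ℝ) M‖ := by
  rw [← ContinuousLinearMap.sSup_sphere_eq_norm, specNorm]
  congr 1
  ext x
  constructor
  · rintro ⟨v, hv, rfl⟩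
    exact ⟨WithLp.toLp 2 v, by simpa [eucNorm_eq_norm_toLp] using hv,
      by simp [eucNorm_eq_norm_toLp]⟩
  · rintro ⟨v, hv, rfl⟩
    exact ⟨v.ofLp, by simpa [eucNorm_eq_norm_toLp] using hv, by simp [eucNorm_eq_norm_toLp]; rfl⟩

lemma singVal_one_eq_norm_toEuclideanCLM (M : Matrix (Fin n) (Fin n) ℝ) :
    singVal M 1 = ‖toEuclideanCLM (𝕜 := ℝ) M‖ := by
  rw [singVal_one_eq_specNorm, specNorm_eq_norm_toEuclideanCLM]

lemma IsUnitSingVec.eucNorm_mulVec {M : Matrix (Fin n) (Fin n) ℝ} {σ : ℝ} {v : Fin n → ℝ}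
    (hσ : 0 ≤ σ) (hv : IsUnitSingVec M σ v) : eucNorm (M *ᵥ v) = σ := by
  have h : v ⬝ᵥ (Mᵀ * M) *ᵥ v = σ ^ 2 * (v ⬝ᵥ v) := by rw [hv.2, dotProduct_smul, smul_eq_mul]
  rw [← mulVec_mulVec, dotProduct_mulVec, vecMul_transpose, ← eucNorm_sq, ← eucNorm_sq, hv.1,
    one_pow, mul_one] at h
  exact (sq_eq_sq₀ (Real.sqrt_nonneg _) hσ).1 h

end SingularValues

section Perturbation

variable {H F : Type*} [NormedAddCommGroup H] [InnerProductSpace ℝ H] [NormedAddCommGroup F]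
  [NormedSpace ℝ F]

theorem sq_norm_ker_component_mul_opNorm_le (T S : H →L[ℝ] F) {v w x : H} (hv : ‖v‖ = 1)
    (hvwx : v = w + x) (hwx : ⟪w, x⟫ = 0) (hTx : T x = 0) (hmax : ‖T + S‖ ≤ ‖(T + S) v‖) :
    ‖x‖ ^ 2 * ‖T‖ ≤ 4 * ‖S‖ := by
  have hpyth : ‖w‖ ^ 2 + ‖x‖ ^ 2 = 1 := by
    rw [sq, sq, ← norm_add_sq_eq_norm_sq_add_norm_sq_real hwx, ← hvwx, hv, mul_one]
  have hlower : ‖T‖ - ‖S‖ ≤ ‖T + S‖ := by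
    simpa using norm_sub_le (T + S) S
  have hupper : ‖(T + S) v‖ ≤ ‖T‖ * ‖w‖ + ‖S‖ := calc
    ‖(T + S) v‖ = ‖T w + S v‖ := by
      rw [_root_.add_apply]; nth_rw 1 [hvwx]; rw [map_add T, hTx, add_zero]
    _ ≤ ‖T w‖ + ‖S v‖ := norm_add_le _ _
    _ ≤ ‖T‖ * ‖w‖ + ‖S‖ := by
      gcongr
      · exact T.le_opNorm w
      · simpa [hv] using S.le_opNorm v
  have hw1 : ‖w‖ ≤ 1 := by nlinarith [norm_nonneg w, norm_nonneg x]
  -- `‖x‖² = (1 - ‖w‖)(1 + ‖w‖) ≤ 2 (1 - ‖w‖)` and `‖T‖ (1 - ‖w‖) ≤ 2 ‖S‖`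
  nlinarith [norm_nonneg w, norm_nonneg T, mul_nonneg (norm_nonneg T) (sub_nonneg.2 hw1)]

end Perturbation

section RowSpace

variable {n : ℕ}

lemma mulVec_eq_zero_of_orthogonal_rows {A : Matrix (Fin n) (Fin n) ℝ} {u : Fin n → ℝ}
    (hperp : ∀ x ∈ Submodule.span ℝ (Set.range fun i : Fin n => A i), ∑ l, u l * x l = 0) :
    A *ᵥ u = 0 :=
  funext fun i => by
    simpa [mulVec, dotProduct, mul_comm] using hperp (A i) (Submodule.subset_span ⟨i, rfl⟩)

theorem sq_mul_singVal_le_of_isUnitSingVec {A E₀ : Matrix (Fin n) (Fin n) ℝ}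
    {v w u : Fin n → ℝ} {c : ℝ} (hv : IsUnitSingVec (A + E₀) (singVal (A + E₀) 1) v)
    (hw : w ∈ Submodule.span ℝ (Set.range fun i : Fin n => A i)) (hu : eucNorm u = 1)
    (hperp : ∀ x ∈ Submodule.span ℝ (Set.range fun i : Fin n => A i), ∑ l, u l * x l = 0)
    (hvwu : v = w + c • u) :
    c ^ 2 * singVal A 1 ≤ 4 * ‖toEuclideanCLM (𝕜 := ℝ) E₀‖ := by
  have hcu : ‖WithLp.toLp 2 (c • u)‖ ^ 2 = c ^ 2 := by
    rw [← eucNorm_eq_norm_toLp, eucNorm_smul, hu, mul_one, sq_abs]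
  have hmax : ‖toEuclideanCLM (𝕜 := ℝ) (A + E₀)‖ ≤
      ‖toEuclideanCLM (𝕜 := ℝ) (A + E₀) (WithLp.toLp 2 v)‖ := by
    rw [← singVal_one_eq_norm_toEuclideanCLM, toEuclideanCLM_toLp, ← eucNorm_eq_norm_toLp,
      hv.eucNorm_mulVec (singVal_nonneg _ 1)]
  rw [map_add] at hmax
  rw [← hcu, singVal_one_eq_norm_toEuclideanCLM]
  refine sq_norm_ker_component_mul_opNorm_le _ _ (w := WithLp.toLp 2 w)
    (by rw [← eucNorm_eq_norm_toLp, hv.1]) (by rw [hvwu]; rfl) ?_ ?_ hmax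
  · rw [EuclideanSpace.inner_toLp_toLp, star_trivial, smul_dotProduct, smul_eq_mul, dotProduct,
      hperp w hw, mul_zero]
  · simp [mulVec_eq_zero_of_orthogonal_rows hperp]

end RowSpace

section Packing

variable {E : Type*} [NormedAddCommGroup E] [NormedSpace ℝ E] [FiniteDimensional ℝ E]

theorem Finset.card_le_of_pairwise_le_dist_of_subset_closedBall {ε : ℝ} (hε : 0 < ε)
    {s : Finset E} (hs : (s : Set E) ⊆ closedBall 0 1)
    (hsep : (s : Set E).Pairwise fun x y => ε ≤ dist x y) :
    (s.card : ℝ) ≤ (1 + 2 / ε) ^ Module.finrank ℝ E := by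
  let _ : MeasurableSpace E := borel E
  have : BorelSpace E := ⟨rfl⟩
  set μ : Measure E := Measure.addHaar
  set d := Module.finrank ℝ E
  have hdisj : (s : Set E).PairwiseDisjoint fun x => ball x (ε / 2) := fun x hx y hy hxy =>
    ball_disjoint_ball (by linarith [hsep hx hy hxy])
  have hsub : (⋃ x ∈ s, ball x (ε / 2)) ⊆ ball 0 (1 + ε / 2) :=
    Set.iUnion₂_subset fun x hx => ball_subset_ball' (by
      linarith [mem_closedBall_zero_iff.1 (hs hx), dist_zero_right x])
  have hvol : (s.card : ℝ≥0∞) * ENNReal.ofReal ((ε / 2) ^ d) * μ (ball 0 1) ≤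
      ENNReal.ofReal ((1 + ε / 2) ^ d) * μ (ball 0 1) := calc
    _ = μ (⋃ x ∈ s, ball x (ε / 2)) := by
      rw [measure_biUnion_finset hdisj fun _ _ => measurableSet_ball]
      simp [μ.addHaar_ball_of_pos _ (half_pos hε), d, mul_assoc]
    _ ≤ μ (ball 0 (1 + ε / 2)) := measure_mono hsub
    _ = _ := μ.addHaar_ball_of_pos _ (by positivity)
  have hvol' := (ENNReal.mul_le_mul_iff_left (measure_ball_pos μ _ one_pos).ne'
    measure_ball_lt_top.ne).1 hvol
  rw [← ENNReal.ofReal_natCast, ← ENNReal.ofReal_mul (by positivity),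
    ENNReal.ofReal_le_ofReal_iff (by positivity), ← le_div_iff₀ (by positivity), ← div_pow] at hvol'
  have hratio : (1 + ε / 2) / (ε / 2) = 1 + 2 / ε := by field_simp; ring
  rwa [hratio] at hvol'

theorem Metric.packingNumber_closedBall_le :
    packingNumber (1 / 4) (closedBall (0 : E) 1) ≤ (9 ^ Module.finrank ℝ E : ℕ) := by
  refine iSup_le fun C => iSup_le fun hCB => iSup_le fun hC => ?_
  by_contra! h
  obtain ⟨t, htC, ht⟩ := Set.exists_subset_encard_eq (Order.add_one_le_of_lt h)
  have htfin : t.Finite := Set.finite_of_encard_eq_coe (by rw [ht]; norm_cast)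
  have hcard := Finset.card_le_of_pairwise_le_dist_of_subset_closedBall (ε := 1 / 4)
    (by norm_num) (s := htfin.toFinset) (by simpa using htC.trans hCB) (by
      intro x hx y hy hxy
      have : ((1 / 4 : ℝ≥0) : ℝ≥0∞) < edist x y :=
        hC (htC (by simpa using hx)) (htC (by simpa using hy)) hxy
      rw [edist_nndist, ENNReal.coe_lt_coe, ← NNReal.coe_lt_coe] at this
      exact (by simpa using this.le))
  rw [htfin.encard_eq_coe_toFinset_card] at ht
  norm_cast at ht
  rw [ht] at hcard
  norm_num at hcard

theorem exists_finset_isCover_closedBall :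
    ∃ N : Finset E, (N : Set E) ⊆ closedBall 0 1 ∧ IsCover (1 / 4) (closedBall 0 1) (N : Set E) ∧
      N.card ≤ 9 ^ Module.finrank ℝ E := by
  have hpack := packingNumber_closedBall_le (E := E)
  have hne := ne_top_of_le_ne_top (ENat.natCast_ne_top _) hpack
  have hN := encard_maximalSeparatedSet hne ▸ hpack
  have hfin : (maximalSeparatedSet (1 / 4) (closedBall (0 : E) 1)).Finite :=
    Set.finite_of_encard_le_coe hN
  refine ⟨hfin.toFinset, by simpa using maximalSeparatedSet_subset, by
    simpa using isCover_maximalSeparatedSet hne, ?_⟩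
  rwa [hfin.encard_eq_coe_toFinset_card, ENat.natCast_le_natCast] at hN

end Packing

lemma Metric.IsCover.exists_norm_sub_le {E : Type*} [SeminormedAddCommGroup E] {ε : ℝ≥0}
    {s N : Set E} (hN : IsCover ε s N) {x : E} (hx : x ∈ s) : ∃ y ∈ N, ‖x - y‖ ≤ ε := by
  simpa [← dist_eq_norm] using hN.subset_iUnion_closedBall hx

section Nets

variable {E F : Type*} [NormedAddCommGroup E] [InnerProductSpace ℝ E] [NormedAddCommGroup F]
  [InnerProductSpace ℝ F]

theorem ContinuousLinearMap.opNorm_le_of_inner_le_of_isCover (T : E →L[ℝ] F) {N : Set E}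
    {M : Set F} (hNcover : IsCover (1 / 4) (closedBall 0 1) N)
    (hM : M ⊆ closedBall 0 1) (hMcover : IsCover (1 / 4) (closedBall 0 1) M) {t : ℝ}
    (ht : 0 ≤ t) (hT : ∀ x ∈ M, ∀ y ∈ N, ⟪x, T y⟫ ≤ t) : ‖T‖ ≤ 2 * t := by
  have hinner : ∀ x y, ‖x‖ ≤ 1 → ‖y‖ ≤ 1 → ⟪x, T y⟫ ≤ t + ‖T‖ / 2 := by
    intro x y hx hy
    obtain ⟨x₀, hx₀M, hxx₀⟩ := hMcover.exists_norm_sub_le (mem_closedBall_zero_iff.2 hx)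
    obtain ⟨y₀, hy₀N, hyy₀⟩ := hNcover.exists_norm_sub_le (mem_closedBall_zero_iff.2 hy)
    have hx₀ : ‖x₀‖ ≤ 1 := mem_closedBall_zero_iff.1 (hM hx₀M)
    have hq : ((1 / 4 : ℝ≥0) : ℝ) = 1 / 4 := by norm_num
    rw [hq] at hxx₀ hyy₀
    have h₁ : ⟪x - x₀, T y⟫ ≤ ‖T‖ / 4 := calc
      _ ≤ ‖x - x₀‖ * (‖T‖ * ‖y‖) := (real_inner_le_norm _ _).trans (by gcongr; exact T.le_opNorm y)
      _ ≤ 1 / 4 * (‖T‖ * 1) := by gcongr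
      _ = ‖T‖ / 4 := by ring
    have h₂ : ⟪x₀, T (y - y₀)⟫ ≤ ‖T‖ / 4 := calc
      _ ≤ ‖x₀‖ * (‖T‖ * ‖y - y₀‖) := (real_inner_le_norm _ _).trans (by gcongr; exact T.le_opNorm _)
      _ ≤ 1 * (‖T‖ * (1 / 4)) := by gcongr
      _ = ‖T‖ / 4 := by ring
    have hsplit : ⟪x, T y⟫ = ⟪x₀, T y₀⟫ + ⟪x - x₀, T y⟫ + ⟪x₀, T (y - y₀)⟫ := by
      rw [inner_sub_left, map_sub, inner_sub_right]; ring
    linarith [hT x₀ hx₀M y₀ hy₀N]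
  have happly : ∀ y, ‖y‖ = 1 → ‖T y‖ ≤ t + ‖T‖ / 2 := by
    intro y hy
    rcases eq_or_ne (T y) 0 with h0 | h0
    · rw [h0, norm_zero]; positivity
    have hTy : 0 < ‖T y‖ := norm_pos_iff.2 h0
    have := hinner (‖T y‖⁻¹ • T y) y (by rw [norm_smul, norm_inv, norm_norm,
      inv_mul_cancel₀ hTy.ne']) hy.le
    rwa [real_inner_smul_left, real_inner_self_eq_norm_sq, sq, ← mul_assoc,
      inv_mul_cancel₀ hTy.ne', one_mul] at this
  linarith [T.opNorm_le_of_unit_norm (by positivity) happly]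

end Nets

lemma ProbabilityTheory.HasSubgaussianMGF.mono {Ω : Type*} [MeasurableSpace Ω] {μ : Measure Ω}
    {X : Ω → ℝ} {c d : ℝ≥0}
    (h : HasSubgaussianMGF X c μ) (hcd : c ≤ d) : HasSubgaussianMGF X d μ where
  integrable_exp_mul := h.integrable_exp_mul
  mgf_le t := (h.mgf_le t).trans (Real.exp_le_exp.2 (by gcongr))

section Rademacher

variable {Ω : Type*} [MeasurableSpace Ω] {μ : Measure Ω} [IsProbabilityMeasure μ]

theorem ProbabilityTheory.hasSubgaussianMGF_one_of_rademacher {X : Ω → ℝ} (hX : Measurable X)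
    (h₁ : μ {ω | X ω = 1} = 1 / 2) (h₂ : μ {ω | X ω = -1} = 1 / 2) :
    HasSubgaussianMGF X 1 μ := by
  have hmeas₁ : MeasurableSet {ω | X ω = 1} := hX (measurableSet_singleton 1)
  have hmeas₂ : MeasurableSet {ω | X ω = -1} := hX (measurableSet_singleton (-1))
  have hdisj : Disjoint {ω | X ω = 1} {ω | X ω = -1} :=
    Set.disjoint_left.2 fun ω (h : X ω = 1) (h' : X ω = -1) => by norm_num [h] at h'
  have hae : ∀ᵐ ω ∂μ, X ω = 1 ∨ X ω = -1 := by
    rw [ae_iff_measure_eq (by rw [Set.ofPred_or]; exact (hmeas₁.union hmeas₂).nullMeasurableSet),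
      Set.ofPred_or, measure_union hdisj hmeas₂, h₁, h₂, measure_univ, ENNReal.add_halves]
  have hmean : μ[X] = 0 := by
    have hind : X =ᵐ[μ] fun ω => 2 * {ω | X ω = 1}.indicator 1 ω - 1 := by
      filter_upwards [hae] with ω hω
      rcases hω with hω | hω <;> simp [Set.indicator, hω] <;> norm_num
    rw [integral_congr_ae hind, integral_sub ((integrable_const _).indicator hmeas₁ |>.const_mul _)
      (integrable_const _), integral_const_mul, integral_indicator_one hmeas₁, measureReal_def, h₁]
    norm_num
  convert hasSubgaussianMGF_of_mem_Icc_of_integral_eq_zero hX.aemeasurable (a := -1) (b := 1)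
    (hae.mono fun ω hω => by rcases hω with hω | hω <;> simp [hω]) hmean
  ext
  norm_num

theorem ProbabilityTheory.measureReal_le_sum_mul_rademacher_le {ι : Type*} [Fintype ι]
    {X : ι → Ω → ℝ} (hX : ∀ i, Measurable (X i)) (hind : iIndepFun X μ)
    (hrad : ∀ i, μ {ω | X i ω = 1} = 1 / 2 ∧ μ {ω | X i ω = -1} = 1 / 2) (a : ι → ℝ)
    {c : ℝ≥0} (hc : ∑ i, a i ^ 2 ≤ c) {t : ℝ} (ht : 0 ≤ t) :
    μ.real {ω | t ≤ ∑ i, a i * X i ω} ≤ Real.exp (-t ^ 2 / (2 * c)) := by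
  have hsum := HasSubgaussianMGF.sum_of_iIndepFun
    (hind.comp (fun i x => a i * x) fun i => measurable_const_mul (a i)) (s := Finset.univ)
    fun i _ => (hasSubgaussianMGF_one_of_rademacher (hX i) (hrad i).1 (hrad i).2).const_mul (a i)
  refine (hsum.mono ?_).measure_ge_le ht
  rw [← NNReal.coe_le_coe]
  convert hc using 2
  rw [NNReal.coe_sum]
  exact Finset.sum_congr rfl fun i _ => mul_one (a i ^ 2)

end Rademacher

lemma eighty_one_mul_exp_neg_eight_lt_one : 81 * Real.exp (-8) < 1 := by
  have h4 : 13 ≤ Real.exp 4 := by linarith [Real.quadratic_le_exp_of_nonneg (x := 4) (by norm_num)]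
  have h8 : Real.exp 8 = Real.exp 4 * Real.exp 4 := by rw [← Real.exp_add]; norm_num
  rw [Real.exp_neg, ← div_eq_mul_inv, div_lt_one (Real.exp_pos _), h8]
  nlinarith

section BernoulliMatrix

variable {Ω : Type} [MeasurableSpace Ω] {μ : Measure Ω} [IsProbabilityMeasure μ] {n : ℕ}
  {E : Ω → Matrix (Fin n) (Fin n) ℝ}

lemma inner_toEuclideanCLM_eq_sum (M : Matrix (Fin n) (Fin n) ℝ) (x y : EuclideanSpace ℝ (Fin n)) :
    ⟪x, toEuclideanCLM (𝕜 := ℝ) M y⟫ = ∑ p : Fin n × Fin n, x p.1 * y p.2 * M p.1 p.2 := by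
  simp only [inner_toEuclideanCLM, dotProduct, mulVec, Finset.mul_sum, Fintype.sum_prod_type]
  exact Finset.sum_congr rfl fun i _ => Finset.sum_congr rfl fun j _ => by ring

lemma sum_sq_mul_apply_le_one {x y : EuclideanSpace ℝ (Fin n)} (hx : ‖x‖ ≤ 1) (hy : ‖y‖ ≤ 1) :
    ∑ p : Fin n × Fin n, (x p.1 * y p.2) ^ 2 ≤ 1 := by
  have hnorm : ∀ z : EuclideanSpace ℝ (Fin n), ∑ i, z i ^ 2 = ‖z‖ ^ 2 := fun z => by
    simp [EuclideanSpace.norm_sq_eq]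
  simp only [Fintype.sum_prod_type, mul_pow, ← Finset.mul_sum, ← Finset.sum_mul, hnorm]
  exact mul_le_one₀ (pow_le_one₀ (norm_nonneg _) hx) (by positivity)
    (pow_le_one₀ (norm_nonneg _) hy)

theorem IsBernoulliMatrix.measureReal_le_inner_le (hE : IsBernoulliMatrix μ E)
    {x y : EuclideanSpace ℝ (Fin n)} (hx : ‖x‖ ≤ 1) (hy : ‖y‖ ≤ 1) {t : ℝ} (ht : 0 ≤ t) :
    μ.real {ω | t ≤ ⟪x, toEuclideanCLM (𝕜 := ℝ) (E ω) y⟫} ≤ Real.exp (-t ^ 2 / 2) := by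
  have h := measureReal_le_sum_mul_rademacher_le (μ := μ)
    (X := fun (p : Fin n × Fin n) ω => E ω p.1 p.2) (fun p => hE.1 p.1 p.2) hE.2.1
    (fun p => hE.2.2 p.1 p.2)
    (fun p => x p.1 * y p.2) (c := 1) (by simpa using sum_sq_mul_apply_le_one hx hy) ht
  simp_rw [inner_toEuclideanCLM_eq_sum]
  rwa [NNReal.coe_one, mul_one] at h

theorem IsBernoulliMatrix.measureReal_two_mul_lt_norm_le (hE : IsBernoulliMatrix μ E) {t : ℝ}
    (ht : 0 ≤ t) :
    μ.real {ω | 2 * t < ‖toEuclideanCLM (𝕜 := ℝ) (E ω)‖} ≤ 81 ^ n * Real.exp (-t ^ 2 / 2) := by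
  obtain ⟨N, hNB, hNcover, hNcard⟩ :=
    exists_finset_isCover_closedBall (E := EuclideanSpace ℝ (Fin n))
  rw [finrank_euclideanSpace_fin] at hNcard
  have hsub : {ω | 2 * t < ‖toEuclideanCLM (𝕜 := ℝ) (E ω)‖} ⊆
      ⋃ x ∈ N, ⋃ y ∈ N, {ω | t ≤ ⟪x, toEuclideanCLM (𝕜 := ℝ) (E ω) y⟫} := by
    intro ω hω
    by_contra h
    simp only [Set.mem_iUnion, not_exists, Set.mem_ofPred_eq, not_le] at h
    exact hω.not_ge (ContinuousLinearMap.opNorm_le_of_inner_le_of_isCover _ hNcover hNB hNcover ht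
      fun x hx y hy => (h x hx y hy).le)
  calc μ.real _ ≤ μ.real (⋃ x ∈ N, ⋃ y ∈ N, {ω | t ≤ ⟪x, toEuclideanCLM (𝕜 := ℝ) (E ω) y⟫}) :=
        measureReal_mono hsub (measure_ne_top μ _)
    _ ≤ ∑ x ∈ N, ∑ y ∈ N, μ.real {ω | t ≤ ⟪x, toEuclideanCLM (𝕜 := ℝ) (E ω) y⟫} :=
        (measureReal_biUnion_finset_le _ _).trans
          (Finset.sum_le_sum fun x _ => measureReal_biUnion_finset_le _ _)
    _ ≤ ∑ _x ∈ N, ∑ _y ∈ N, Real.exp (-t ^ 2 / 2) :=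
        Finset.sum_le_sum fun x hx => Finset.sum_le_sum fun y hy =>
          hE.measureReal_le_inner_le (mem_closedBall_zero_iff.1 (hNB hx))
            (mem_closedBall_zero_iff.1 (hNB hy)) ht
    _ = (N.card : ℝ) ^ 2 * Real.exp (-t ^ 2 / 2) := by simp [sq, mul_assoc]
    _ ≤ 81 ^ n * Real.exp (-t ^ 2 / 2) := by
        gcongr
        calc (N.card : ℝ) ^ 2 ≤ ((9 ^ n : ℕ) : ℝ) ^ 2 := by gcongr
          _ = 81 ^ n := by push_cast; rw [← pow_mul, mul_comm, pow_mul]; norm_num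

theorem IsBernoulliMatrix.measure_lt_norm_le (hE : IsBernoulliMatrix μ E) :
    μ {ω | 8 * Real.sqrt n < ‖toEuclideanCLM (𝕜 := ℝ) (E ω)‖} ≤
      ENNReal.ofReal ((81 * Real.exp (-8)) ^ n) := by
  have h := hE.measureReal_two_mul_lt_norm_le (t := 4 * Real.sqrt n) (by positivity)
  have hsq : (4 * Real.sqrt n) ^ 2 = 16 * n := by
    rw [mul_pow, Real.sq_sqrt (Nat.cast_nonneg n)]; norm_num
  rw [hsq, show -(16 * (n : ℝ)) / 2 = n * (-8) by ring, Real.exp_nat_mul, ← mul_pow,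
    ← mul_assoc, show (2 : ℝ) * 4 = 8 by norm_num] at h
  rw [← ofReal_measureReal]
  exact ENNReal.ofReal_le_ofReal h

end BernoulliMatrix

theorem orthogonal_component_bound_general (α₁ α₂ : ℝ) :
    ∃ C : ℝ, 0 < C ∧ ∀ η : ℝ, 0 < η → ∃ n₀ : ℕ, ∀ n ≥ n₀,
      ∀ (A : Matrix (Fin n) (Fin n) ℝ) (r : ℕ)
        (Ω : Type) [MeasurableSpace Ω] (μ : Measure Ω) [IsProbabilityMeasure μ]
        (E : Ω → Matrix (Fin n) (Fin n) ℝ),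
        A.rank = r →
        (r : ℝ) ≤ (n : ℝ) ^ (1 - α₁) →
        singVal A 1 ≤ (n : ℝ) ^ α₂ →
        0 < singVal A 1 - singVal A 2 →
        IsBernoulliMatrix μ E →
        μ {ω | ∀ (v₁' w u : Fin n → ℝ) (c₀ : ℝ),
              IsUnitSingVec (A + E ω) (singVal (A + E ω) 1) v₁' →
              w ∈ Submodule.span ℝ (Set.range fun i : Fin n => A i) →
              eucNorm u = 1 →
              (∀ x ∈ Submodule.span ℝ (Set.range fun i : Fin n => A i),
                ∑ l, u l * x l = 0) →
              0 ≤ c₀ →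
              v₁' = w + c₀ • u →
              c₀ ^ 2 ≤ C * Real.sqrt n / singVal A 1}
          ≥ 1 - ENNReal.ofReal η := by
  refine ⟨32, by norm_num, fun η hη => ?_⟩
  obtain ⟨n₀, hn₀⟩ := exists_pow_lt_of_lt_one hη eighty_one_mul_exp_neg_eight_lt_one
  refine ⟨n₀, fun n hn A r Ω _ μ _ E _ _ _ hgap hE => ?_⟩
  have hσ : 0 < singVal A 1 := by linarith [singVal_nonneg A 2]
  set bad := {ω | 8 * Real.sqrt n < ‖toEuclideanCLM (𝕜 := ℝ) (E ω)‖}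
  have hbad : μ bad ≤ ENNReal.ofReal η := hE.measure_lt_norm_le.trans <| ENNReal.ofReal_le_ofReal <|
    (pow_le_pow_of_le_one (by positivity) eighty_one_mul_exp_neg_eight_lt_one.le hn).trans hn₀.le
  refine le_trans ?_ (measure_mono (s := badᶜ) fun ω hω v₁' w u c₀ hv hw hu hperp _ hdecomp => ?_)
  · calc 1 - ENNReal.ofReal η ≤ 1 - μ bad := tsub_le_tsub_left hbad 1
      _ ≤ μ badᶜ := by
        rw [tsub_le_iff_right, ← measure_univ (μ := μ), ← Set.compl_union_self bad]
        exact measure_union_le _ _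
  · have hEω : ‖toEuclideanCLM (𝕜 := ℝ) (E ω)‖ ≤ 8 * Real.sqrt n := not_lt.1 hω
    rw [le_div_iff₀ hσ]
    linarith [sq_mul_singVal_le_of_isUnitSingVec hv hw hu hperp hdecomp]

/-- Bound on the component of `v₁'` orthogonal to the row space of `A` (equation (3.3)):
writing `v₁' = w + c₀ u` with `w` in the row space of `A`, `u` a unit vector orthogonal to
it and `c₀ ≥ 0`, we have `c₀² ≤ C√n/σ₁` with probability at least `1 - η`. -/
theorem orthogonal_component_bound (α₁ α₂ : ℝ) (hα₁ : 0 < α₁) (hα₂ : 0 < α₂) :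
    ∃ C : ℝ, 0 < C ∧ ∀ η : ℝ, 0 < η → ∃ n₀ : ℕ, ∀ n ≥ n₀,
      ∀ (A : Matrix (Fin n) (Fin n) ℝ) (r : ℕ)
        (Ω : Type) [MeasurableSpace Ω] (μ : Measure Ω) [IsProbabilityMeasure μ]
        (E : Ω → Matrix (Fin n) (Fin n) ℝ),
        A.rank = r →
        (r : ℝ) ≤ (n : ℝ) ^ (1 - α₁) →
        singVal A 1 ≤ (n : ℝ) ^ α₂ →
        0 < singVal A 1 - singVal A 2 →
        IsBernoulliMatrix μ E →
        μ {ω | ∀ (v₁' w u : Fin n → ℝ) (c₀ : ℝ),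
              IsUnitSingVec (A + E ω) (singVal (A + E ω) 1) v₁' →
              w ∈ Submodule.span ℝ (Set.range fun i : Fin n => A i) →
              eucNorm u = 1 →
              (∀ x ∈ Submodule.span ℝ (Set.range fun i : Fin n => A i),
                ∑ l, u l * x l = 0) →
              0 ≤ c₀ →
              v₁' = w + c₀ • u →
              c₀ ^ 2 ≤ C * Real.sqrt n / singVal A 1}
          ≥ 1 - ENNReal.ofReal η :=
  orthogonal_component_bound_general α₁ α₂
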